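/- Let d ≥ 1 and let b : [0,∞)^d → ℝ satisfy Assumption (A); let P be the associated limiting set, assumed Jordan measurable with Lebesgue measure |P| > 0, and fix ε > 0. Let D be a set, let (Ψ_ν)_{ν∈ℕ^d} be functions on D with sup_{y∈D}|Ψ_ν(y)| ≤ 1, and let u(y) = ∑_{ν∈ℕ^d} c_ν Ψ_ν(y) with real coefficients satisfying |c_ν| ≤ e^{−b(ν)} (the series converging absolutely and uniformly). Then there exists M_ε ∈ ℕ such that for every M ≥ M_ε the following holds: if Λ_M ⊂ ℕ^d is a quasi-optimal index set of cardinality M and (g_ν)_{ν∈Λ_M} are any functions on D with sup_{y∈D}|Ψ_ν(y) − g_ν(y)| ≤ e^{b(ν) − (2M/|P|)^{1/d}} for each ν ∈ Λ_M, then sup_{y∈D} | u(y) − ∑_{ν∈Λ_M} c_ν g_ν(y) | ≤ C_u(ε)·M·exp( −( M/(|P|(1+ε)) )^{1/d} ) + M·exp( −( 2M/|P| )^{1/d} ), where C_u(ε) = (4e + 4εe − 2)·e/(e−1). In particular the total error is at most (C_u(ε)+1)·M·exp( −( M/(|P|(1+ε)) )^{1/d} ). -/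

import Mathlib

open MeasureTheory Real Filter Pointwise

noncomputable section

/-- Embedding of a multi-index `ν ∈ ℕ^d` into `ℝ^d`. -/
def nuR {d : ℕ} (ν : Fin d → ℕ) : Fin d → ℝ := fun i => (ν i : ℝ)

/-- Euclidean norm on `ℝ^d` (viewed as `Fin d → ℝ`). -/
def eNorm {d : ℕ} (x : Fin d → ℝ) : ℝ := Real.sqrt (∑ i, x i ^ 2)

/-- `τ ↦ b(τν)/τ` is increasing on `(0,∞)` for every nonnegative `ν`. -/
def IsIncreasingCase {d : ℕ} (b : (Fin d → ℝ) → ℝ) : Prop :=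
  ∀ ν : Fin d → ℝ, (∀ i, 0 ≤ ν i) → MonotoneOn (fun τ : ℝ => b (τ • ν) / τ) (Set.Ioi 0)

/-- `τ ↦ b(τν)/τ` is decreasing on `(0,∞)` for every nonnegative `ν`. -/
def IsDecreasingCase {d : ℕ} (b : (Fin d → ℝ) → ℝ) : Prop :=
  ∀ ν : Fin d → ℝ, (∀ i, 0 ≤ ν i) → AntitoneOn (fun τ : ℝ => b (τ • ν) / τ) (Set.Ioi 0)

/-- Assumption (A) on the exponent map `b : [0,∞)^d → ℝ`. -/
def AssumptionA {d : ℕ} (b : (Fin d → ℝ) → ℝ) : Prop :=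
  b 0 = 0 ∧ ContinuousOn b {x | ∀ i, 0 ≤ x i} ∧
  (IsIncreasingCase b ∨ IsDecreasingCase b) ∧
  ∃ c C : ℝ, 0 < c ∧ c < C ∧ ∃ R : ℝ, ∀ x : Fin d → ℝ, (∀ i, 0 ≤ x i) → R ≤ eNorm x →
    c * eNorm x ≤ b x ∧ b x ≤ C * eNorm x

/-- `P_τ = {ν ∈ [0,∞)^d : b(ν) ≤ τ}`. -/
def Pset {d : ℕ} (b : (Fin d → ℝ) → ℝ) (τ : ℝ) : Set (Fin d → ℝ) :=
  {x | (∀ i, 0 ≤ x i) ∧ b x ≤ τ}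

/-- Constant `C_u(ε) = (4e + 4εe − 2)·e/(e−1)`. -/
def Cu (ε : ℝ) : ℝ :=
  (4 * Real.exp 1 + 4 * ε * Real.exp 1 - 2) * Real.exp 1 / (Real.exp 1 - 1)

open scoped ENNReal

/-!
For every `A > |P|`, eventually `#{ν ∈ ℕ^d : b(ν) ≤ τ} ≤ A τ^d`: the sublevel sets satisfy
`P_τ ⊆ τ • K` for a compact `K` with `|K| < A` (in the increasing case `K = τ₀⁻¹ P_{τ₀}`, by
continuity of the measure along the decreasing family `τ⁻¹ P_τ`; in the decreasing case
`K = closure P`, of measure `|P|` by Jordan measurability), and the unit cubes at the lattice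
points of `τ • K` fill at most `τ • K_δ` for a thickening `K_δ` of `K` with `|K_δ| < A`.
With `A = |P|(1 + ε/2)` a quasi-optimal `Λ_M` contains every `ν` with `b(ν) ≤ B_M = (M/A)^{1/d}`,
so splitting `e^{-b} = e^{-βb} e^{-(1-β)b}` bounds the tail by `e^{-β B_M} ∑_ν e^{-(1-β)b(ν)}`;
for `(A/(|P|(1+ε)))^{1/d} < β < 1` this is eventually below `exp(-(M/(|P|(1+ε)))^{1/d})`,
hence below `C_u(ε) M exp(-(M/(|P|(1+ε)))^{1/d})` as `C_u(ε) ≥ 1`. Each substituted term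
costs `|c_ν| ε_ν ≤ e^{-(2M/|P|)^{1/d}}`.
-/

section eNorm

variable {d : ℕ}

lemma eNorm_nonneg (x : Fin d → ℝ) : 0 ≤ eNorm x := Real.sqrt_nonneg _

lemma abs_le_eNorm (x : Fin d → ℝ) (i : Fin d) : |x i| ≤ eNorm x := by
  rw [eNorm, ← Real.sqrt_sq_eq_abs]
  exact Real.sqrt_le_sqrt
    (Finset.single_le_sum (f := fun j => x j ^ 2) (fun j _ => sq_nonneg _) (Finset.mem_univ i))

lemma norm_le_eNorm (x : Fin d → ℝ) : ‖x‖ ≤ eNorm x :=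
  (pi_norm_le_iff_of_nonneg (eNorm_nonneg x)).2 fun i => abs_le_eNorm x i

lemma eNorm_smul {a : ℝ} (ha : 0 ≤ a) (x : Fin d → ℝ) : eNorm (a • x) = a * eNorm x := by
  simp only [eNorm, Pi.smul_apply, smul_eq_mul, mul_pow, ← Finset.mul_sum]
  rw [Real.sqrt_mul (by positivity), Real.sqrt_sq ha]

lemma sum_le_card_mul_eNorm (x : Fin d → ℝ) : ∑ i, x i ≤ d * eNorm x := by
  simpa using Finset.sum_le_sum fun i (_ : i ∈ Finset.univ) =>
    (le_abs_self _).trans (abs_le_eNorm x i)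

end eNorm

section Pset

variable {d : ℕ} {b : (Fin d → ℝ) → ℝ} {c R : ℝ}

lemma mem_inv_smul_Pset_iff {τ : ℝ} (hτ : 0 < τ) {x : Fin d → ℝ} :
    x ∈ τ⁻¹ • Pset b τ ↔ (∀ i, 0 ≤ x i) ∧ b (τ • x) / τ ≤ 1 := by
  simp only [Set.mem_inv_smul_set_iff₀ hτ.ne', Pset, Set.mem_ofPred_eq, Pi.smul_apply,
    smul_eq_mul, mul_nonneg_iff_of_pos_left hτ, div_le_one hτ]

lemma antitoneOn_inv_smul_Pset (hinc : IsIncreasingCase b) :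
    AntitoneOn (fun τ : ℝ => τ⁻¹ • Pset b τ) (Set.Ioi 0) := by
  intro τ hτ τ' hτ' hle x hx
  rw [mem_inv_smul_Pset_iff hτ'] at hx
  rw [mem_inv_smul_Pset_iff hτ]
  exact ⟨hx.1, (hinc x hx.1 hτ hτ' hle).trans hx.2⟩

lemma monotoneOn_inv_smul_Pset (hdec : IsDecreasingCase b) :
    MonotoneOn (fun τ : ℝ => τ⁻¹ • Pset b τ) (Set.Ioi 0) := by
  intro τ hτ τ' hτ' hle x hx
  rw [mem_inv_smul_Pset_iff hτ] at hx
  rw [mem_inv_smul_Pset_iff hτ']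
  exact ⟨hx.1, (hdec x hx.1 hτ hτ' hle).trans hx.2⟩

variable (hc : 0 < c)
  (hgrow : ∀ x : Fin d → ℝ, (∀ i, 0 ≤ x i) → R ≤ eNorm x → c * eNorm x ≤ b x)
include hc hgrow

lemma eNorm_le_of_mem_Pset {τ : ℝ} {x : Fin d → ℝ} (hx : x ∈ Pset b τ) :
    eNorm x ≤ max R (τ / c) := by
  by_contra! h
  have hbx := hgrow x hx.1 ((le_max_left _ _).trans h.le)
  have : τ < c * eNorm x := (div_lt_iff₀' hc).1 ((le_max_right _ _).trans_lt h)
  linarith [hx.2]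

lemma eNorm_le_of_mem_inv_smul_Pset {t : ℝ} (ht : 1 ≤ t) {x : Fin d → ℝ}
    (hx : x ∈ t⁻¹ • Pset b t) : eNorm x ≤ |R| + c⁻¹ := by
  obtain ⟨p, hp, rfl⟩ := hx
  have ht0 : 0 < t := by linarith
  rw [eNorm_smul (inv_nonneg.2 ht0.le), inv_mul_le_iff₀ ht0]
  calc eNorm p ≤ max R (t / c) := eNorm_le_of_mem_Pset hc hgrow hp
    _ ≤ |R| + t / c := max_le ((le_abs_self R).trans (le_add_of_nonneg_right (by positivity)))
        (le_add_of_nonneg_left (abs_nonneg R))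
    _ ≤ t * (|R| + c⁻¹) := by
        rw [mul_add, div_eq_mul_inv]
        gcongr
        nlinarith [abs_nonneg R]

lemma isCompact_Pset (hcont : ContinuousOn b {x | ∀ i, 0 ≤ x i}) (τ : ℝ) :
    IsCompact (Pset b τ) :=
  Metric.isCompact_of_isClosed_isBounded
    (hcont.preimage_isClosed_of_isClosed (isClosed_Ici (a := (0 : Fin d → ℝ))) isClosed_Iic)
    (isBounded_iff_forall_norm_le.2 ⟨max R (τ / c), fun x hx =>
      (norm_le_eNorm x).trans (eNorm_le_of_mem_Pset hc hgrow hx)⟩)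

end Pset

section Covering

variable {d : ℕ} {b : (Fin d → ℝ) → ℝ} {c R : ℝ} {P : Set (Fin d → ℝ)} {a : ℝ≥0∞}

lemma exists_isCompact_Pset_subset_smul_of_increasing (hc : 0 < c)
    (hgrow : ∀ x : Fin d → ℝ, (∀ i, 0 ≤ x i) → R ≤ eNorm x → c * eNorm x ≤ b x)
    (hcont : ContinuousOn b {x | ∀ i, 0 ≤ x i}) (hinc : IsIncreasingCase b)
    (hP : P = ⋂ τ ∈ Set.Ioi (0 : ℝ), τ⁻¹ • Pset b τ) (ha : volume P < a) :
    ∃ K, IsCompact K ∧ volume K < a ∧ ∀ᶠ τ in atTop, Pset b τ ⊆ τ • K := by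
  set Q : ℕ → Set (Fin d → ℝ) := fun n => ((n : ℝ) + 1)⁻¹ • Pset b ((n : ℝ) + 1)
  have hQ : ∀ n, IsCompact (Q n) := fun n => (isCompact_Pset hc hgrow hcont _).smul _
  have hQle : ∀ (n : ℕ) {τ : ℝ}, 0 < τ → τ ≤ n + 1 → Q n ⊆ τ⁻¹ • Pset b τ := fun n τ hτ hle =>
    antitoneOn_inv_smul_Pset hinc hτ (Set.mem_Ioi.2 (by positivity)) hle
  have hQP : ⋂ n, Q n = P := by
    rw [hP]
    refine subset_antisymm (Set.subset_iInter₂ fun τ hτ => ?_)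
      (Set.subset_iInter fun n => Set.biInter_subset_of_mem (Set.mem_Ioi.2 (by positivity)))
    obtain ⟨n, hn⟩ := exists_nat_ge τ
    exact (Set.iInter_subset _ n).trans (hQle n hτ (by linarith))
  have hlim := tendsto_measure_iInter_atTop (μ := volume)
    (fun n => (hQ n).isClosed.measurableSet.nullMeasurableSet)
    (fun m n hmn => hQle n (τ := m + 1) (by positivity) (by gcongr))
    ⟨0, (hQ 0).measure_lt_top.ne⟩
  rw [hQP] at hlim
  obtain ⟨n, hn⟩ := (hlim.eventually_lt_const ha).exists
  refine ⟨Q n, hQ n, hn, (eventually_ge_atTop ((n : ℝ) + 1)).mono fun τ hτ => ?_⟩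
  have hτ0 : 0 < τ := by linarith [(n.cast_nonneg : (0 : ℝ) ≤ n)]
  exact (Set.subset_smul_set_iff₀ hτ0.ne').2
    (antitoneOn_inv_smul_Pset hinc (Set.mem_Ioi.2 (by positivity)) hτ0 hτ)

lemma exists_isCompact_Pset_subset_smul_of_decreasing (hc : 0 < c)
    (hgrow : ∀ x : Fin d → ℝ, (∀ i, 0 ≤ x i) → R ≤ eNorm x → c * eNorm x ≤ b x)
    (hdec : IsDecreasingCase b) (hP : P = ⋃ τ ∈ Set.Ioi (0 : ℝ), τ⁻¹ • Pset b τ)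
    (hJordan : volume (frontier P) = 0) (ha : volume P < a) :
    ∃ K, IsCompact K ∧ volume K < a ∧ ∀ᶠ τ in atTop, Pset b τ ⊆ τ • K := by
  have hbdd : Bornology.IsBounded P := by
    refine isBounded_iff_forall_norm_le.2 ⟨|R| + c⁻¹, fun x hx => (norm_le_eNorm x).trans ?_⟩
    rw [hP] at hx
    obtain ⟨τ, hτ, hx⟩ := Set.mem_iUnion₂.1 hx
    exact eNorm_le_of_mem_inv_smul_Pset hc hgrow (le_max_right τ 1) <|
      monotoneOn_inv_smul_Pset hdec hτ (Set.mem_Ioi.2 (by positivity)) (le_max_left τ 1) hx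
  refine ⟨closure P, hbdd.isCompact_closure, by rwa [measure_closure_of_null_frontier hJordan],
    (eventually_gt_atTop 0).mono fun τ hτ => ?_⟩
  refine (Set.subset_smul_set_iff₀ hτ.ne').2 (subset_closure.trans' ?_)
  rw [hP]
  exact Set.subset_biUnion_of_mem (u := fun τ : ℝ => τ⁻¹ • Pset b τ) hτ

lemma exists_isCompact_Pset_subset_smul (hb : AssumptionA b)
    (hPinc : IsIncreasingCase b → P = ⋂ τ ∈ Set.Ioi (0 : ℝ), τ⁻¹ • Pset b τ)
    (hPdec : IsDecreasingCase b → P = ⋃ τ ∈ Set.Ioi (0 : ℝ), τ⁻¹ • Pset b τ)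
    (hJordan : volume (frontier P) = 0) (ha : volume P < a) :
    ∃ K, IsCompact K ∧ volume K < a ∧ ∀ᶠ τ in atTop, Pset b τ ⊆ τ • K := by
  obtain ⟨-, hcont, hcase, c, _, hc, -, R, hgrow⟩ := hb
  have hgrow' := fun x h0 hR => (hgrow x h0 hR).1
  rcases hcase with hinc | hdec
  · exact exists_isCompact_Pset_subset_smul_of_increasing hc hgrow' hcont hinc (hPinc hinc) ha
  · exact exists_isCompact_Pset_subset_smul_of_decreasing hc hgrow' hdec (hPdec hdec) hJordan ha

end Covering

section Counting

variable {d : ℕ}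

def latCube (ν : Fin d → ℕ) : Set (Fin d → ℝ) :=
  Set.univ.pi fun i => Set.Ico (ν i : ℝ) (ν i + 1)

lemma volume_latCube (ν : Fin d → ℕ) : volume (latCube ν) = 1 := by
  simp [latCube, volume_pi_pi]

lemma measurableSet_latCube (ν : Fin d → ℕ) : MeasurableSet (latCube ν) :=
  MeasurableSet.univ_pi fun _ => measurableSet_Ico

lemma pairwise_disjoint_latCube : Pairwise (Function.onFun Disjoint (latCube (d := d))) := by
  intro ν μ hne
  refine Set.disjoint_left.2 fun x hν hμ => hne (funext fun i => ?_)
  exact (Nat.floor_eq_on_Ico _ _ (hν i (Set.mem_univ i))).symm.trans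
    (Nat.floor_eq_on_Ico _ _ (hμ i (Set.mem_univ i)))

lemma latCube_subset_smul_cthickening {K : Set (Fin d → ℝ)} {τ δ : ℝ} (hτ : 0 < τ)
    (hτδ : 1 ≤ τ * δ) {ν : Fin d → ℕ} (hν : nuR ν ∈ τ • K) :
    latCube ν ⊆ τ • Metric.cthickening δ K := by
  intro x hx
  obtain ⟨k, hk, hkν⟩ := hν
  rw [Set.mem_smul_set_iff_inv_smul_mem₀ hτ.ne']
  refine Metric.mem_cthickening_of_dist_le _ k δ K hk ?_
  have hdist : dist x (nuR ν) ≤ 1 := (dist_pi_le_iff zero_le_one).2 fun i => by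
    have := hx i (Set.mem_univ i)
    rw [Real.dist_eq, abs_le, nuR]
    constructor <;> linarith [this.1, this.2]
  have hk' : k = τ⁻¹ • nuR ν := by rw [← hkν, inv_smul_smul₀ hτ.ne']
  rw [hk', dist_smul₀, Real.norm_of_nonneg (inv_nonneg.2 hτ.le)]
  exact (mul_le_of_le_one_right (inv_nonneg.2 hτ.le) hdist).trans
    ((inv_le_iff_one_le_mul₀ hτ).2 (by linarith))

lemma eventually_card_le_of_isCompact {K : Set (Fin d → ℝ)} (hK : IsCompact K) {A : ℝ}
    (hA : volume K < ENNReal.ofReal A) :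
    ∀ᶠ τ in atTop, ∀ F : Finset (Fin d → ℕ), (∀ ν ∈ F, nuR ν ∈ τ • K) →
      (F.card : ℝ) ≤ A * τ ^ d := by
  obtain ⟨δ, hδ, hδK⟩ :=
    ((tendsto_measure_cthickening_of_isCompact hK).eventually_lt_const hA).exists_gt
  have hA0 : 0 < A := ENNReal.ofReal_pos.1 (lt_of_le_of_lt zero_le hA)
  filter_upwards [eventually_ge_atTop δ⁻¹, eventually_gt_atTop 0] with τ hτδ hτ F hF
  have hcubes : ⋃ ν ∈ F, latCube ν ⊆ τ • Metric.cthickening δ K :=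
    Set.iUnion₂_subset fun ν hν => latCube_subset_smul_cthickening hτ
      ((inv_le_iff_one_le_mul₀ hδ).1 hτδ) (hF ν hν)
  suffices (F.card : ℝ≥0∞) ≤ ENNReal.ofReal (A * τ ^ d) by
    simpa using ENNReal.toReal_le_of_le_ofReal (by positivity) this
  calc (F.card : ℝ≥0∞) = volume (⋃ ν ∈ F, latCube ν) := by
        rw [measure_biUnion_finset (fun ν _ μ _ h => pairwise_disjoint_latCube h)
          (fun ν _ => measurableSet_latCube ν)]
        simp [volume_latCube]
    _ ≤ volume (τ • Metric.cthickening δ K) := measure_mono hcubes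
    _ = ENNReal.ofReal (τ ^ d) * volume (Metric.cthickening δ K) := by
        rw [Measure.addHaar_smul_of_nonneg _ hτ.le, Module.finrank_fin_fun]
    _ ≤ ENNReal.ofReal (τ ^ d) * ENNReal.ofReal A := by gcongr
    _ = ENNReal.ofReal (A * τ ^ d) := by rw [← ENNReal.ofReal_mul (by positivity), mul_comm]

lemma eventually_card_sublevel_le {b : (Fin d → ℝ) → ℝ} (hb : AssumptionA b)
    {P : Set (Fin d → ℝ)}
    (hPinc : IsIncreasingCase b → P = ⋂ τ ∈ Set.Ioi (0 : ℝ), τ⁻¹ • Pset b τ)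
    (hPdec : IsDecreasingCase b → P = ⋃ τ ∈ Set.Ioi (0 : ℝ), τ⁻¹ • Pset b τ)
    (hJordan : volume (frontier P) = 0) {A : ℝ} (hA : volume P < ENNReal.ofReal A) :
    ∀ᶠ τ in atTop, ∀ F : Finset (Fin d → ℕ), (∀ ν ∈ F, b (nuR ν) ≤ τ) →
      (F.card : ℝ) ≤ A * τ ^ d := by
  obtain ⟨K, hK, hKA, hPK⟩ := exists_isCompact_Pset_subset_smul hb hPinc hPdec hJordan hA
  filter_upwards [hPK, eventually_card_le_of_isCompact hK hKA] with τ hPτ hcard F hF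
  exact hcard F fun ν hν => hPτ ⟨fun i => Nat.cast_nonneg _, hF ν hν⟩

end Counting

lemma summable_prod_pow {r : ℝ} (h0 : 0 ≤ r) (h1 : r < 1) :
    ∀ n : ℕ, Summable fun ν : Fin n → ℕ => ∏ i, r ^ ν i
  | 0 => Summable.of_finite
  | n + 1 => by
    have hprod := (summable_geometric_of_lt_one h0 h1).mul_of_nonneg (summable_prod_pow h0 h1 n)
      (fun k => pow_nonneg h0 k) fun ν => Finset.prod_nonneg fun i _ => pow_nonneg h0 _
    refine (Fin.consEquiv fun _ => ℕ).summable_iff.1 (hprod.congr fun p => ?_)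
    simp [Fin.consEquiv, Fin.prod_univ_succ]

lemma summable_exp_neg_mul {d : ℕ} {b : (Fin d → ℝ) → ℝ} {c R : ℝ} (hc : 0 < c)
    (hgrow : ∀ x : Fin d → ℝ, (∀ i, 0 ≤ x i) → R ≤ eNorm x → c * eNorm x ≤ b x)
    {θ : ℝ} (hθ : 0 < θ) : Summable fun ν : Fin d → ℕ => exp (-(θ * b (nuR ν))) := by
  set a := θ * c / (d + 1)
  have ha : 0 < a := by positivity
  have hfin : {ν : Fin d → ℕ | ¬ R ≤ eNorm (nuR ν)}.Finite := by
    refine (Set.Finite.pi fun _ => Set.finite_Iic ⌈R⌉₊).subset fun ν hν i _ => ?_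
    have := (le_abs_self _).trans (abs_le_eNorm (nuR ν) i) |>.trans (not_le.1 hν).le
    exact Nat.cast_le.1 (this.trans (Nat.le_ceil R))
  refine (summable_prod_pow (exp_pos (-a)).le (exp_lt_one_iff.2 (neg_lt_zero.2 ha)) d)
    |>.of_norm_bounded_eventually (Filter.eventually_cofinite.2 hfin |>.mono fun ν hν => ?_)
  have hsum : a * ∑ i, (ν i : ℝ) ≤ θ * b (nuR ν) := calc
    a * ∑ i, (ν i : ℝ) ≤ a * ((d + 1) * eNorm (nuR ν)) := by
      gcongr
      exact (sum_le_card_mul_eNorm (nuR ν)).trans (by nlinarith [eNorm_nonneg (nuR ν)])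
    _ = θ * (c * eNorm (nuR ν)) := by
      rw [← mul_assoc, div_mul_cancel₀ _ (by positivity), mul_assoc]
    _ ≤ θ * b (nuR ν) := by gcongr; exact hgrow _ (fun i => Nat.cast_nonneg _) hν
  rw [Real.norm_of_nonneg (exp_pos _).le]
  calc exp (-(θ * b (nuR ν))) ≤ exp (-(a * ∑ i, (ν i : ℝ))) := exp_le_exp.2 (by linarith)
    _ = ∏ i, exp (-a) ^ ν i := by
      simp_rw [← Real.exp_nat_mul, ← Real.exp_sum, Finset.mul_sum, ← Finset.sum_neg_distrib]
      ring_nf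

lemma lt_of_notMem_of_quasiOptimal {α : Type*} {f : α → ℝ} {Λ : Finset α}
    (hΛ : ∀ ν ∈ Λ, ∀ μ : α, μ ∉ Λ → f ν ≤ f μ) {t : ℝ}
    (ht : ∀ F : Finset α, (∀ ν ∈ F, f ν ≤ t) → F.card ≤ Λ.card) {μ : α} (hμ : μ ∉ Λ) :
    t < f μ := by
  classical
  by_contra! hle
  have := ht (insert μ Λ) (Finset.forall_mem_insert _ _ _ |>.2
    ⟨hle, fun ν hν => (hΛ ν hν μ hμ).trans hle⟩)
  rw [Finset.card_insert_of_notMem hμ] at this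
  omega

lemma eventually_lt_of_quasiOptimal {α : Type*} {f : α → ℝ} {d : ℕ} (hd : d ≠ 0) {A : ℝ}
    (hA : 0 < A) (hcount : ∀ᶠ τ in atTop, ∀ F : Finset α, (∀ ν ∈ F, f ν ≤ τ) →
      (F.card : ℝ) ≤ A * τ ^ d) :
    ∀ᶠ M : ℕ in atTop, ∀ Λ : Finset α, Λ.card = M → (∀ ν ∈ Λ, ∀ μ : α, μ ∉ Λ → f ν ≤ f μ) →
      ∀ μ ∉ Λ, ((M : ℝ) / A) ^ ((1 : ℝ) / d) < f μ := by
  have hB : Tendsto (fun M : ℕ => ((M : ℝ) / A) ^ ((1 : ℝ) / d)) atTop atTop :=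
    (tendsto_rpow_atTop (by positivity)).comp (tendsto_natCast_atTop_atTop.atTop_div_const hA)
  filter_upwards [hB.eventually hcount] with M hM Λ hΛ hΛopt μ hμ
  refine lt_of_notMem_of_quasiOptimal hΛopt (fun F hF => ?_) hμ
  have hM' := hM F hF
  rw [one_div, Real.rpow_inv_natCast_pow (by positivity) hd, mul_div_cancel₀ _ hA.ne'] at hM'
  exact_mod_cast hΛ ▸ hM'

section Tail

variable {α : Type*} {f : α → ℝ} {Λ : Finset α} {B β : ℝ}

lemma exp_neg_le_exp_neg_mul_mul (hβ : 0 ≤ β) {x : ℝ} (hx : B ≤ x) :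
    exp (-x) ≤ exp (-(β * B)) * exp (-((1 - β) * x)) := by
  rw [← exp_add]
  exact exp_le_exp.2 (by nlinarith)

variable {a : α → ℝ} (hβ : 0 ≤ β) (ha : ∀ ν, |a ν| ≤ exp (-f ν)) (hB : ∀ μ ∉ Λ, B < f μ)
  (hs : Summable fun ν => exp (-((1 - β) * f ν)))
include hβ ha hB hs

lemma summable_compl_of_abs_le_exp : Summable fun μ : ↥((Λ : Set α)ᶜ) => a μ :=
  ((hs.mul_left _).subtype _).of_norm_bounded fun μ =>
    (ha μ).trans (exp_neg_le_exp_neg_mul_mul hβ (hB μ μ.2).le)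

lemma abs_tsum_compl_le :
    |∑' μ : ↥((Λ : Set α)ᶜ), a μ| ≤ exp (-(β * B)) * ∑' ν, exp (-((1 - β) * f ν)) := by
  have hsum := summable_compl_of_abs_le_exp hβ ha hB hs
  have hbound : ∀ μ : ↥((Λ : Set α)ᶜ), |a μ| ≤ exp (-(β * B)) * exp (-((1 - β) * f μ)) :=
    fun μ => (ha μ).trans (exp_neg_le_exp_neg_mul_mul hβ (hB μ μ.2).le)
  calc |∑' μ : ↥((Λ : Set α)ᶜ), a μ| ≤ ∑' μ : ↥((Λ : Set α)ᶜ), |a μ| := by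
        simpa only [Real.norm_eq_abs] using norm_tsum_le_tsum_norm hsum.norm
    _ ≤ ∑' μ : ↥((Λ : Set α)ᶜ), exp (-(β * B)) * exp (-((1 - β) * f μ)) :=
        hsum.abs.tsum_le_tsum hbound ((hs.mul_left _).subtype _)
    _ = exp (-(β * B)) * ∑' μ : ↥((Λ : Set α)ᶜ), exp (-((1 - β) * f μ)) := tsum_mul_left
    _ ≤ exp (-(β * B)) * ∑' ν, exp (-((1 - β) * f ν)) := by
        gcongr
        exact hs.tsum_subtype_le _ _ fun ν => (exp_pos _).le

end Tail

lemma eventually_exp_neg_mul_mul_le {ι : Type*} {l : Filter ι} {B : ι → ℝ}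
    (hB : Tendsto B l atTop) {ρ β : ℝ} (hρβ : ρ < β) (S : ℝ) :
    ∀ᶠ M in l, exp (-(β * B M)) * S ≤ exp (-(ρ * B M)) := by
  filter_upwards [(hB.const_mul_atTop (sub_pos.2 hρβ)).eventually_ge_atTop S] with M hM
  calc exp (-(β * B M)) * S ≤ exp (-(β * B M)) * exp ((β - ρ) * B M) := by
        gcongr
        linarith [add_one_le_exp ((β - ρ) * B M)]
    _ = exp (-(ρ * B M)) := by rw [← exp_add]; ring_nf

lemma eventually_abs_tsum_compl_le {α : Type*} {f : α → ℝ}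
    (hf : ∀ θ > 0, Summable fun ν => exp (-(θ * f ν))) {d : ℕ} (hd : d ≠ 0) {A W : ℝ}
    (hA : 0 < A) (hAW : A < W)
    (hcount : ∀ᶠ τ in atTop, ∀ F : Finset α, (∀ ν ∈ F, f ν ≤ τ) → (F.card : ℝ) ≤ A * τ ^ d) :
    ∀ᶠ M : ℕ in atTop, ∀ Λ : Finset α, Λ.card = M → (∀ ν ∈ Λ, ∀ μ : α, μ ∉ Λ → f ν ≤ f μ) →
      ∀ a : α → ℝ, (∀ ν, |a ν| ≤ exp (-f ν)) →
        Summable a ∧ |∑' μ : ↥((Λ : Set α)ᶜ), a μ| ≤ exp (-((M : ℝ) / W) ^ ((1 : ℝ) / d)) := by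
  have hW : 0 < W := hA.trans hAW
  have hd' : (0 : ℝ) < 1 / d := one_div_pos.2 (Nat.cast_pos.2 (Nat.pos_of_ne_zero hd))
  set ρ := (A / W) ^ ((1 : ℝ) / d)
  have hρ0 : 0 ≤ ρ := by positivity
  have hρ : ρ < 1 := rpow_lt_one (by positivity) ((div_lt_one hW).2 hAW) hd'
  set β := (1 + ρ) / 2 with hβ
  have hβ0 : 0 ≤ β := by rw [hβ]; positivity
  have hs := hf (1 - β) (by rw [hβ]; linarith)
  have hB : Tendsto (fun M : ℕ => ((M : ℝ) / A) ^ ((1 : ℝ) / d)) atTop atTop :=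
    (tendsto_rpow_atTop hd').comp (tendsto_natCast_atTop_atTop.atTop_div_const hA)
  filter_upwards [eventually_lt_of_quasiOptimal hd hA hcount,
    eventually_exp_neg_mul_mul_le hB (by rw [hβ]; linarith : ρ < β)
      (∑' ν, exp (-((1 - β) * f ν)))] with M hcompl htail Λ hΛ hΛopt a ha
  have hrate : ρ * ((M : ℝ) / A) ^ ((1 : ℝ) / d) = ((M : ℝ) / W) ^ ((1 : ℝ) / d) := by
    rw [← mul_rpow (by positivity) (by positivity)]
    field_simp
  rw [hrate] at htail
  have hΛB := hcompl Λ hΛ hΛopt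
  exact ⟨(Finset.summable_compl_iff Λ).1 (summable_compl_of_abs_le_exp hβ0 ha hΛB hs),
    (abs_tsum_compl_le hβ0 ha hΛB hs).trans htail⟩

lemma abs_tsum_sub_sum_le {α : Type*} {c f p q : α → ℝ} {Λ : Finset α} {s T : ℝ}
    (hc : ∀ ν, |c ν| ≤ exp (-f ν)) (hpq : ∀ ν ∈ Λ, |p ν - q ν| ≤ exp (f ν - s))
    (hsum : Summable fun ν => c ν * p ν) (htail : |∑' μ : ↥((Λ : Set α)ᶜ), c μ * p μ| ≤ T) :
    |∑' ν, c ν * p ν - ∑ ν ∈ Λ, c ν * q ν| ≤ T + Λ.card * exp (-s) := by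
  have hhead : |∑ ν ∈ Λ, c ν * (p ν - q ν)| ≤ Λ.card * exp (-s) := by
    refine (Finset.abs_sum_le_sum_abs _ _).trans ?_
    rw [← nsmul_eq_mul]
    refine Finset.sum_le_card_nsmul _ _ _ fun ν hν => ?_
    rw [abs_mul, show -s = -f ν + (f ν - s) by ring, exp_add]
    exact mul_le_mul (hc ν) (hpq ν hν) (abs_nonneg _) (exp_pos _).le
  calc |∑' ν, c ν * p ν - ∑ ν ∈ Λ, c ν * q ν|
      = |∑' μ : ↥((Λ : Set α)ᶜ), c μ * p μ + ∑ ν ∈ Λ, c ν * (p ν - q ν)| := by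
        rw [← hsum.sum_add_tsum_compl (s := Λ)]
        simp only [mul_sub, Finset.sum_sub_distrib]
        ring_nf
    _ ≤ T + Λ.card * exp (-s) := (abs_add_le _ _).trans (add_le_add htail hhead)

lemma one_le_Cu {ε : ℝ} (hε : 0 ≤ ε) : 1 ≤ Cu ε := by
  have he : 2 ≤ exp 1 := by linarith [add_one_le_exp 1]
  rw [Cu, le_div_iff₀ (by linarith)]
  nlinarith [mul_nonneg (mul_nonneg hε (exp_pos 1).le) (exp_pos 1).le]

theorem stmt7_general {d : ℕ} (hd : 1 ≤ d) (b : (Fin d → ℝ) → ℝ) (hb : AssumptionA b)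
    (P : Set (Fin d → ℝ))
    (hPinc : IsIncreasingCase b → P = ⋂ τ ∈ Set.Ioi (0 : ℝ), τ⁻¹ • Pset b τ)
    (hPdec : IsDecreasingCase b → P = ⋃ τ ∈ Set.Ioi (0 : ℝ), τ⁻¹ • Pset b τ)
    (hJordan : volume (frontier P) = 0) (hPpos : 0 < (volume P).toReal)
    (ε : ℝ) (hε : 0 < ε)
    {D : Type*} (Ψ : (Fin d → ℕ) → D → ℝ) (hΨ : ∀ ν y, |Ψ ν y| ≤ 1)
    (c : (Fin d → ℕ) → ℝ) (hc : ∀ ν, |c ν| ≤ Real.exp (-b (nuR ν)))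
    (u : D → ℝ) (hu : ∀ y, u y = ∑' ν : Fin d → ℕ, c ν * Ψ ν y) :
    ∃ Mε : ℕ, ∀ M : ℕ, Mε ≤ M →
      ∀ Λ : Finset (Fin d → ℕ), Λ.card = M →
        (∀ ν ∈ Λ, ∀ μ : Fin d → ℕ, μ ∉ Λ → b (nuR ν) ≤ b (nuR μ)) →
        ∀ g : (Fin d → ℕ) → D → ℝ,
          (∀ ν ∈ Λ, ∀ y : D,
            |Ψ ν y - g ν y| ≤
              Real.exp (b (nuR ν) - (2 * M / (volume P).toReal) ^ ((1 : ℝ) / d))) →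
          ∀ y : D,
            |u y - ∑ ν ∈ Λ, c ν * g ν y| ≤
                Cu ε * M *
                  Real.exp (-((M : ℝ) / ((volume P).toReal * (1 + ε))) ^ ((1 : ℝ) / d)) +
                  M * Real.exp (-(2 * M / (volume P).toReal) ^ ((1 : ℝ) / d)) ∧
              |u y - ∑ ν ∈ Λ, c ν * g ν y| ≤
                (Cu ε + 1) * M *
                  Real.exp (-((M : ℝ) / ((volume P).toReal * (1 + ε))) ^ ((1 : ℝ) / d)) := by
  set V := (volume P).toReal
  have hVA : V < V * (1 + ε / 2) := by nlinarith
  have hAW : V * (1 + ε / 2) < V * (1 + ε) := by nlinarith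
  have hcount := eventually_card_sublevel_le hb hPinc hPdec hJordan <| by
    rw [← ENNReal.ofReal_toReal (ENNReal.toReal_pos_iff.1 hPpos).2.ne]
    exact (ENNReal.ofReal_lt_ofReal_iff (by positivity)).2 hVA
  obtain ⟨-, -, -, c₀, _, hc₀, -, R, hgrow⟩ := hb
  obtain ⟨Mε, hMε⟩ := eventually_atTop.1 <| (eventually_ge_atTop 1).and <|
    eventually_abs_tsum_compl_le
      (fun θ hθ => summable_exp_neg_mul hc₀ (fun x h0 hR => (hgrow x h0 hR).1) hθ)
      (by omega) (by positivity) hAW hcount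
  refine ⟨Mε, fun M hM Λ hΛ hΛopt g hg y => ?_⟩
  obtain ⟨h1M, htailM⟩ := hMε M hM
  obtain ⟨hsummable, htail⟩ := htailM Λ hΛ hΛopt (fun ν => c ν * Ψ ν y) fun ν =>
    (abs_mul _ _).trans_le (mul_le_of_le_one_right (abs_nonneg _) (hΨ ν y)) |>.trans (hc ν)
  have herr := abs_tsum_sub_sum_le hc (fun ν hν => hg ν hν y) hsummable htail
  rw [← hu y, hΛ] at herr
  have hCuM : 1 ≤ Cu ε * M :=
    one_le_mul_of_one_le_of_one_le (one_le_Cu hε.le) (by exact_mod_cast h1M)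
  have hrates : exp (-(2 * M / V) ^ ((1 : ℝ) / d)) ≤
      exp (-((M : ℝ) / (V * (1 + ε))) ^ ((1 : ℝ) / d)) := by
    gcongr <;> nlinarith
  have hexp := exp_pos (-((M : ℝ) / (V * (1 + ε))) ^ ((1 : ℝ) / d))
  constructor <;> nlinarith

/-- Analytic core of the main theorem (Theorem 3.1): combining the quasi-optimal tail bound
with per-term substitution errors `ε_ν = e^{b(ν) − (2M/|P|)^{1/d}}` for the approximants
`g_ν` of the basis functions `Ψ_ν` yields, for all `M ≥ M_ε`, a total uniform error of at
most `C_u(ε)·M·exp(−(M/(|P|(1+ε)))^{1/d}) + M·exp(−(2M/|P|)^{1/d})`, which in turn is at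
most `(C_u(ε)+1)·M·exp(−(M/(|P|(1+ε)))^{1/d})`. -/
theorem stmt7 {d : ℕ} (hd : 1 ≤ d) (b : (Fin d → ℝ) → ℝ) (hb : AssumptionA b)
    (P : Set (Fin d → ℝ))
    (hPinc : IsIncreasingCase b → P = ⋂ τ ∈ Set.Ioi (0 : ℝ), τ⁻¹ • Pset b τ)
    (hPdec : IsDecreasingCase b → P = ⋃ τ ∈ Set.Ioi (0 : ℝ), τ⁻¹ • Pset b τ)
    (hJordan : volume (frontier P) = 0) (hPpos : 0 < (volume P).toReal)
    (ε : ℝ) (hε : 0 < ε)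
    {D : Type*} (Ψ : (Fin d → ℕ) → D → ℝ) (hΨ : ∀ ν y, |Ψ ν y| ≤ 1)
    (c : (Fin d → ℕ) → ℝ) (hc : ∀ ν, |c ν| ≤ Real.exp (-b (nuR ν)))
    (hsum : Summable fun ν : Fin d → ℕ => |c ν|)
    (u : D → ℝ) (hu : ∀ y, u y = ∑' ν : Fin d → ℕ, c ν * Ψ ν y) :
    ∃ Mε : ℕ, ∀ M : ℕ, Mε ≤ M →
      ∀ Λ : Finset (Fin d → ℕ), Λ.card = M →
        (∀ ν ∈ Λ, ∀ μ : Fin d → ℕ, μ ∉ Λ → b (nuR ν) ≤ b (nuR μ)) →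
        ∀ g : (Fin d → ℕ) → D → ℝ,
          (∀ ν ∈ Λ, ∀ y : D,
            |Ψ ν y - g ν y| ≤
              Real.exp (b (nuR ν) - (2 * M / (volume P).toReal) ^ ((1 : ℝ) / d))) →
          ∀ y : D,
            |u y - ∑ ν ∈ Λ, c ν * g ν y| ≤
                Cu ε * M *
                  Real.exp (-((M : ℝ) / ((volume P).toReal * (1 + ε))) ^ ((1 : ℝ) / d)) +
                  M * Real.exp (-(2 * M / (volume P).toReal) ^ ((1 : ℝ) / d)) ∧
              |u y - ∑ ν ∈ Λ, c ν * g ν y| ≤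
                (Cu ε + 1) * M *
                  Real.exp (-((M : ℝ) / ((volume P).toReal * (1 + ε))) ^ ((1 : ℝ) / d)) :=
  stmt7_general hd b hb P hPinc hPdec hJordan hPpos ε hε Ψ hΨ c hc u hu

end
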